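/- Consider a random walk on an infinite, locally finite, connected weighted graph with positive conductances. If the effective resistance from a vertex o to infinity is finite, then the walk started at o is transient. -/

import Mathlib

/-!
For a finite set `A ∋ o`, let `v` be the voltage that is `1` at `o`, `0` off `A`, and harmonic
on `A \ {o}`; there `v x` is the probability that the walk from `x` reaches `o` before leaving `A`.
It is an admissible potential, and Green's identity turns its energy into the current out of `o`,
`π o * (1 - p_A)`, where `p_A` is the probability of returning to `o` before leaving `A`. Hence
`p_A ≤ 1 - ε / π o` for every `A`. Every finite family of first-return paths lies in some such `A`,
so the return probability obeys the same bound.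
-/

/-- The return probability to `o` of the random walk with transition kernel `q`
on a countable state space: the sum over all paths starting and ending at `o`
whose interior avoids `o` of the product of transition probabilities. -/
noncomputable def returnProb {V : Type*} [Countable V] [DecidableEq V]
    (q : V → V → ℝ) (o : V) : ℝ :=
  ∑' n : ℕ, ∑' v : Fin (n + 2) → V,
    (if v 0 = o ∧ v (Fin.last (n + 1)) = o ∧
        (∀ i : Fin (n + 2), i ≠ 0 → i ≠ Fin.last (n + 1) → v i ≠ o)
      then ∏ i : Fin (n + 1), q (v i.castSucc) (v i.succ) else 0)

open Filter Topology Finset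

section Paths

variable {V : Type*} (q : V → V → ℝ)

def pathWeight {n : ℕ} (v : Fin (n + 1) → V) : ℝ :=
  ∏ i : Fin n, q (v i.castSucc) (v i.succ)

variable {q}

theorem pathWeight_nonneg (hq : ∀ x y, 0 ≤ q x y) {n : ℕ} (v : Fin (n + 1) → V) :
    0 ≤ pathWeight q v :=
  prod_nonneg fun _ _ => hq _ _

theorem pathWeight_eq_mul_tail {n : ℕ} (v : Fin (n + 2) → V) :
    pathWeight q v = q (v 0) (v 1) * pathWeight q (Fin.tail v) := by
  rw [pathWeight, Fin.prod_univ_succ]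
  rfl

end Paths

section HitWeights

variable {V : Type*} [DecidableEq V] (q : V → V → ℝ) (o : V) (A : Finset V)

/-- The total weight of the paths of `n + 1` steps from `x` to `o` whose intermediate vertices
lie in `A.erase o`. -/
noncomputable def hitWeightWithin : ℕ → V → ℝ
  | 0, x => q x o
  | n + 1, x => ∑ y ∈ A.erase o, q x y * hitWeightWithin n y

noncomputable def hitProbWithin (x : V) : ℝ :=
  ∑' n, hitWeightWithin q o A n x

variable {q}

theorem hitWeightWithin_nonneg (hq : ∀ x y, 0 ≤ q x y) : ∀ n x, 0 ≤ hitWeightWithin q o A n x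
  | 0, x => hq x o
  | n + 1, x => sum_nonneg fun y _ => mul_nonneg (hq x y) (hitWeightWithin_nonneg hq n y)

theorem sum_range_hitWeightWithin_le_one (hq : ∀ x y, 0 ≤ q x y)
    (hq1 : ∀ x (s : Finset V), ∑ y ∈ s, q x y ≤ 1) (N : ℕ) (x : V) :
    ∑ n ∈ range N, hitWeightWithin q o A n x ≤ 1 := by
  induction N generalizing x with
  | zero => simp
  | succ N ih =>
    have hsplit : ∑ n ∈ range N, hitWeightWithin q o A (n + 1) x
        = ∑ y ∈ A.erase o, q x y * ∑ n ∈ range N, hitWeightWithin q o A n y := by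
      simp only [hitWeightWithin, mul_sum]
      exact sum_comm
    have hstep : ∑ y ∈ A.erase o, q x y * ∑ n ∈ range N, hitWeightWithin q o A n y
        ≤ ∑ y ∈ A.erase o, q x y :=
      sum_le_sum fun y _ => mul_le_of_le_one_right (hq x y) (ih y)
    have hrow : q x o + ∑ y ∈ A.erase o, q x y ≤ 1 := by
      simpa [sum_insert (notMem_erase o A)] using hq1 x (insert o (A.erase o))
    rw [sum_range_succ', hsplit, hitWeightWithin]
    linarith

theorem summable_hitWeightWithin (hq : ∀ x y, 0 ≤ q x y)
    (hq1 : ∀ x (s : Finset V), ∑ y ∈ s, q x y ≤ 1) (x : V) :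
    Summable fun n => hitWeightWithin q o A n x :=
  summable_of_sum_range_le (fun n => hitWeightWithin_nonneg o A hq n x)
    (sum_range_hitWeightWithin_le_one o A hq hq1 · x)

theorem hitWeightWithin_le_one (hq : ∀ x y, 0 ≤ q x y)
    (hq1 : ∀ x (s : Finset V), ∑ y ∈ s, q x y ≤ 1) (n : ℕ) (x : V) :
    hitWeightWithin q o A n x ≤ 1 :=
  (single_le_sum (fun k _ => hitWeightWithin_nonneg o A hq k x) (self_mem_range_succ n)).trans
    (sum_range_hitWeightWithin_le_one o A hq hq1 (n + 1) x)

theorem hitProbWithin_eq (hq : ∀ x y, 0 ≤ q x y)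
    (hq1 : ∀ x (s : Finset V), ∑ y ∈ s, q x y ≤ 1) (x : V) :
    hitProbWithin q o A x = q x o + ∑ y ∈ A.erase o, q x y * hitProbWithin q o A y := by
  have hsum := summable_hitWeightWithin o A hq hq1
  rw [hitProbWithin, (hsum x).tsum_eq_zero_add]
  congr 1
  simp only [hitWeightWithin, hitProbWithin, ← tsum_mul_left]
  exact Summable.tsum_finsetSum fun y _ => (hsum y).mul_left _

theorem sum_pathWeight_le_hitWeightWithin (hq : ∀ x y, 0 ≤ q x y) (n : ℕ) (x : V)
    (S : Finset (Fin (n + 2) → V))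
    (hS : ∀ v ∈ S, v 0 = x ∧ v (Fin.last (n + 1)) = o ∧
      ∀ i, i ≠ 0 → i ≠ Fin.last (n + 1) → v i ∈ A.erase o) :
    ∑ v ∈ S, pathWeight q v ≤ hitWeightWithin q o A n x := by
  induction n generalizing x with
  | zero =>
    have hsub : S ⊆ {![x, o]} := fun v hv => by
      rw [mem_singleton]
      ext i
      fin_cases i
      exacts [(hS v hv).1, (hS v hv).2.1]
    calc ∑ v ∈ S, pathWeight q v ≤ ∑ v ∈ {![x, o]}, pathWeight q v :=
          sum_le_sum_of_subset_of_nonneg hsub fun v _ _ => pathWeight_nonneg hq v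
      _ = hitWeightWithin q o A 0 x := by simp [pathWeight, hitWeightWithin]
  | succ n ih =>
    have hsecond : ∀ v ∈ S, v 1 ∈ A.erase o := fun v hv =>
      (hS v hv).2.2 1 (by simp) (by simp [Fin.ext_iff])
    rw [← sum_fiberwise_of_maps_to hsecond, hitWeightWithin]
    refine sum_le_sum fun y _ => ?_
    set T := S.filter fun v => v 1 = y
    have hT : ∀ v ∈ T, v ∈ S ∧ v 1 = y := fun v hv => mem_filter.mp hv
    have hinj : Set.InjOn Fin.tail (T : Set (Fin (n + 3) → V)) := fun v hv w hw h => by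
      rw [← Fin.cons_self_tail v, ← Fin.cons_self_tail w, h,
        (hS v (hT v hv).1).1, (hS w (hT w hw).1).1]
    calc ∑ v ∈ T, pathWeight q v = q x y * ∑ t ∈ T.image Fin.tail, pathWeight q t := by
          rw [sum_image hinj, mul_sum]
          refine sum_congr rfl fun v hv => ?_
          rw [pathWeight_eq_mul_tail, (hS v (hT v hv).1).1, (hT v hv).2]
      _ ≤ q x y * hitWeightWithin q o A n y := by
          refine mul_le_mul_of_nonneg_left (ih y _ fun t ht => ?_) (hq x y)
          obtain ⟨v, hv, rfl⟩ := mem_image.mp ht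
          obtain ⟨-, hlast, hmid⟩ := hS v (hT v hv).1
          refine ⟨(hT v hv).2, hlast, fun i hi0 hil => hmid i.succ (Fin.succ_ne_zero i) ?_⟩
          rwa [← Fin.succ_last, Ne, Fin.succ_inj]

variable (q) in
noncomputable def unitVoltage (x : V) : ℝ :=
  if x = o then 1 else if x ∈ A then hitProbWithin q o A x else 0

theorem unitVoltage_self : unitVoltage q o A o = 1 :=
  if_pos rfl

theorem unitVoltage_eq_zero_of_notMem {x : V} (hoA : o ∈ A) (hx : x ∉ A) :
    unitVoltage q o A x = 0 := by
  rw [unitVoltage, if_neg (ne_of_mem_of_not_mem hoA hx).symm, if_neg hx]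

theorem unitVoltage_of_mem_of_ne {x : V} (hx : x ∈ A) (hxo : x ≠ o) :
    unitVoltage q o A x = hitProbWithin q o A x := by
  rw [unitVoltage, if_neg hxo, if_pos hx]

theorem sum_mul_unitVoltage (hq : ∀ x y, 0 ≤ q x y)
    (hq1 : ∀ x (s : Finset V), ∑ y ∈ s, q x y ≤ 1) (hoA : o ∈ A) (x : V) :
    ∑ y ∈ A, q x y * unitVoltage q o A y = hitProbWithin q o A x := by
  rw [hitProbWithin_eq o A hq hq1 x, ← add_sum_erase _ _ hoA, unitVoltage_self, mul_one]
  congr 1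
  refine sum_congr rfl fun y hy => ?_
  rw [unitVoltage_of_mem_of_ne o A (mem_of_mem_erase hy) (ne_of_mem_erase hy)]

end HitWeights

theorem tendsto_piFinset_const_atTop {ι α : Type*} [Fintype ι] [DecidableEq ι] [DecidableEq α] :
    Tendsto (fun A : Finset α => Fintype.piFinset fun _ : ι => A) atTop atTop :=
  tendsto_atTop_atTop.2 fun T => ⟨T.biUnion fun v => univ.image v, fun _ hA v hv =>
    Fintype.mem_piFinset.2 fun i => hA (mem_biUnion.2 ⟨v, hv, mem_image_of_mem v (mem_univ i)⟩)⟩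

section FirstReturn

variable {V : Type*} [DecidableEq V] {q : V → V → ℝ} {o : V}

variable (q o) in
def firstReturnWeight {n : ℕ} (v : Fin (n + 2) → V) : ℝ :=
  if v 0 = o ∧ v (Fin.last (n + 1)) = o ∧
      (∀ i : Fin (n + 2), i ≠ 0 → i ≠ Fin.last (n + 1) → v i ≠ o)
    then pathWeight q v else 0

theorem returnProb_eq_tsum_firstReturnWeight [Countable V] :
    returnProb q o = ∑' n, ∑' v : Fin (n + 2) → V, firstReturnWeight q o v :=
  rfl

theorem firstReturnWeight_nonneg (hq : ∀ x y, 0 ≤ q x y) {n : ℕ} (v : Fin (n + 2) → V) :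
    0 ≤ firstReturnWeight q o v := by
  unfold firstReturnWeight
  split_ifs
  exacts [pathWeight_nonneg hq v, le_rfl]

theorem sum_firstReturnWeight_le_hitWeightWithin (hq : ∀ x y, 0 ≤ q x y) {n : ℕ} (A : Finset V)
    (T : Finset (Fin (n + 2) → V)) (hT : ∀ v ∈ T, ∀ i, v i ∈ A) :
    ∑ v ∈ T, firstReturnWeight q o v ≤ hitWeightWithin q o A n o := by
  simp only [firstReturnWeight, ← sum_filter]
  refine sum_pathWeight_le_hitWeightWithin o A hq n o _ fun v hv => ?_
  obtain ⟨hvT, h0, hlast, hmid⟩ := mem_filter.mp hv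
  exact ⟨h0, hlast, fun i hi0 hil => mem_erase.mpr ⟨hmid i hi0 hil, hT v hvT i⟩⟩

theorem summable_firstReturnWeight (hq : ∀ x y, 0 ≤ q x y)
    (hq1 : ∀ x (s : Finset V), ∑ y ∈ s, q x y ≤ 1) (n : ℕ) :
    Summable fun v : Fin (n + 2) → V => firstReturnWeight q o v :=
  summable_of_sum_le (fun v => firstReturnWeight_nonneg hq v) fun T =>
    (sum_firstReturnWeight_le_hitWeightWithin hq _ T fun v hv i =>
      mem_biUnion.2 ⟨v, hv, mem_image_of_mem v (mem_univ i)⟩).trans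
    (hitWeightWithin_le_one o _ hq hq1 n o)

theorem returnProb_le_of_forall_hitProbWithin_le [Countable V] (hq : ∀ x y, 0 ≤ q x y)
    (hq1 : ∀ x (s : Finset V), ∑ y ∈ s, q x y ≤ 1) {M : ℝ}
    (hM : ∀ A : Finset V, o ∈ A → hitProbWithin q o A o ≤ M) :
    returnProb q o ≤ M := by
  have hM0 : 0 ≤ M := (tsum_nonneg fun n => hitWeightWithin_nonneg o {o} hq n o).trans
    (hM {o} (mem_singleton_self o))
  rw [returnProb_eq_tsum_firstReturnWeight]
  refine tsum_le_of_sum_le' hM0 fun F => ?_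
  have hlim : Tendsto (fun A : Finset V => ∑ n ∈ F, ∑ v ∈ Fintype.piFinset fun _ => A,
      firstReturnWeight q o v) atTop (𝓝 (∑ n ∈ F, ∑' v, firstReturnWeight q o v)) :=
    tendsto_finsetSum F fun n _ =>
      (summable_firstReturnWeight hq hq1 n).hasSum.comp tendsto_piFinset_const_atTop
  refine le_of_tendsto hlim ((eventually_ge_atTop {o}).mono fun A hoA => ?_)
  calc ∑ n ∈ F, ∑ v ∈ Fintype.piFinset (fun _ => A), firstReturnWeight q o v
      ≤ ∑ n ∈ F, hitWeightWithin q o A n o := sum_le_sum fun n _ =>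
        sum_firstReturnWeight_le_hitWeightWithin hq A _ fun v hv => Fintype.mem_piFinset.1 hv
    _ ≤ hitProbWithin q o A o := (summable_hitWeightWithin o A hq hq1 o).sum_le_tsum F
        fun n _ => hitWeightWithin_nonneg o A hq n o
    _ ≤ M := hM A (singleton_subset_iff.1 hoA)

end FirstReturn

section Energy

variable {V : Type*} (c : V → V → ℝ)

noncomputable def dirichletEnergy (f : V → ℝ) : ℝ :=
  (1 / 2) * ∑' x, ∑' y, c x y * (f x - f y) ^ 2

noncomputable def totalConductance (x : V) : ℝ :=
  ∑' y, c x y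

noncomputable def transitionKernel (x y : V) : ℝ :=
  c x y / totalConductance c x

variable {c}

theorem sum_sum_mul_sub_sq (hsymm : ∀ x y, c x y = c y x) (B : Finset V) (f : V → ℝ) :
    ∑ x ∈ B, ∑ y ∈ B, c x y * (f x - f y) ^ 2
      = 2 * ∑ x ∈ B, f x * ∑ y ∈ B, c x y * (f x - f y) := by
  have hswap : ∑ x ∈ B, ∑ y ∈ B, f y * (c x y * (f y - f x))
      = ∑ x ∈ B, ∑ y ∈ B, f x * (c x y * (f x - f y)) := by
    rw [sum_comm]
    exact sum_congr rfl fun x _ => sum_congr rfl fun y _ => by rw [hsymm]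
  calc ∑ x ∈ B, ∑ y ∈ B, c x y * (f x - f y) ^ 2
      = ∑ x ∈ B, ∑ y ∈ B, (f x * (c x y * (f x - f y)) + f y * (c x y * (f y - f x))) :=
        sum_congr rfl fun x _ => sum_congr rfl fun y _ => by ring
    _ = 2 * ∑ x ∈ B, f x * ∑ y ∈ B, c x y * (f x - f y) := by
        simp only [sum_add_distrib]
        rw [hswap, two_mul]
        simp only [mul_sum]

theorem dirichletEnergy_eq_sum (hsymm : ∀ x y, c x y = c y x)
    (hfin : ∀ x, (Function.support (c x)).Finite) {A : Finset V} {f : V → ℝ}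
    (hf : ∀ x ∉ A, f x = 0) :
    dirichletEnergy c f = ∑ x ∈ A, f x * (totalConductance c x * f x - ∑ y ∈ A, c x y * f y) := by
  classical
  set B := A ∪ A.biUnion fun x => (hfin x).toFinset
  have hAB : A ⊆ B := subset_union_left
  have hnbr : ∀ x ∈ A, ∀ y ∉ B, c x y = 0 := fun x hx y hy => by
    by_contra h
    exact hy (mem_union_right _ (mem_biUnion.2 ⟨x, hx, (hfin x).mem_toFinset.2 h⟩))
  have hterm : ∀ x y, x ∉ B ∨ y ∉ B → c x y * (f x - f y) ^ 2 = 0 := by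
    intro x y hxy
    by_cases hx : x ∈ A
    · rw [hnbr x hx y (hxy.resolve_left fun h => h (hAB hx)), zero_mul]
    by_cases hy : y ∈ A
    · rw [hsymm, hnbr y hy x (hxy.resolve_right fun h => h (hAB hy)), zero_mul]
    rw [hf x hx, hf y hy]
    ring
  have hinner : ∀ x ∈ A, ∑ y ∈ B, c x y * (f x - f y)
      = totalConductance c x * f x - ∑ y ∈ A, c x y * f y := fun x hx => by
    have hrestrict : ∑ y ∈ B, c x y * f y = ∑ y ∈ A, c x y * f y :=
      (sum_subset hAB fun y _ hy => by rw [hf y hy, mul_zero]).symm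
    rw [totalConductance, tsum_eq_sum (hnbr x hx), sum_mul, ← hrestrict, ← sum_sub_distrib]
    exact sum_congr rfl fun y _ => by ring
  calc dirichletEnergy c f = (1 / 2) * ∑ x ∈ B, ∑ y ∈ B, c x y * (f x - f y) ^ 2 := by
        rw [dirichletEnergy, tsum_congr fun x => tsum_eq_sum fun y hy => hterm x y (.inr hy),
          tsum_eq_sum fun x hx => sum_eq_zero fun y _ => hterm x y (.inl hx)]
    _ = ∑ x ∈ B, f x * ∑ y ∈ B, c x y * (f x - f y) := by
        rw [sum_sum_mul_sub_sq hsymm]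
        ring
    _ = ∑ x ∈ A, f x * ∑ y ∈ B, c x y * (f x - f y) :=
        (sum_subset hAB fun x _ hx => by rw [hf x hx, zero_mul]).symm
    _ = ∑ x ∈ A, f x * (totalConductance c x * f x - ∑ y ∈ A, c x y * f y) :=
        sum_congr rfl fun x hx => by rw [hinner x hx]

variable (hnonneg : ∀ x y, 0 ≤ c x y) (hfin : ∀ x, (Function.support (c x)).Finite)
  (hpos : ∀ x, 0 < totalConductance c x)
include hnonneg hpos

theorem transitionKernel_nonneg (x y : V) : 0 ≤ transitionKernel c x y :=
  div_nonneg (hnonneg x y) (hpos x).le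

include hfin in
theorem sum_transitionKernel_le_one (x : V) (s : Finset V) :
    ∑ y ∈ s, transitionKernel c x y ≤ 1 :=
  calc ∑ y ∈ s, transitionKernel c x y ≤ ∑' y, transitionKernel c x y :=
        ((summable_of_hasFiniteSupport (hfin x)).div_const _).sum_le_tsum s
          fun y _ => transitionKernel_nonneg hnonneg hpos x y
    _ = 1 := by
        simp only [transitionKernel, tsum_div_const]
        exact div_self (hpos x).ne'

include hfin in
theorem dirichletEnergy_unitVoltage [DecidableEq V] (hsymm : ∀ x y, c x y = c y x) {o : V}
    {A : Finset V} (hoA : o ∈ A) :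
    dirichletEnergy c (unitVoltage (transitionKernel c) o A)
      = totalConductance c o * (1 - hitProbWithin (transitionKernel c) o A o) := by
  have hq := transitionKernel_nonneg hnonneg hpos
  have hq1 := sum_transitionKernel_le_one hnonneg hfin hpos
  have hflux : ∀ x, ∑ y ∈ A, c x y * unitVoltage (transitionKernel c) o A y
      = totalConductance c x * hitProbWithin (transitionKernel c) o A x := fun x => by
    rw [← sum_mul_unitVoltage o A hq hq1 hoA x, mul_sum]
    refine sum_congr rfl fun y _ => ?_
    rw [transitionKernel, ← mul_assoc, mul_div_cancel₀ _ (hpos x).ne']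
  rw [dirichletEnergy_eq_sum hsymm hfin fun x hx => unitVoltage_eq_zero_of_notMem o A hoA hx,
    sum_eq_single_of_mem o hoA fun x hx hxo => ?_, hflux, unitVoltage_self]
  · ring
  · rw [hflux, unitVoltage_of_mem_of_ne o A hx hxo, sub_self, mul_zero]

end Energy

theorem stmt7_general {V : Type*} [Countable V] [DecidableEq V]
    (c : V → V → ℝ) (hsymm : ∀ x y, c x y = c y x) (hnonneg : ∀ x y, 0 ≤ c x y)
    (hlocfin : ∀ x, {y | 0 < c x y}.Finite)
    (hpos : ∀ x, 0 < ∑' y, c x y)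
    (o : V)
    (hres : ∃ ε > 0, ∀ f : V → ℝ, f o = 1 → (Function.support f).Finite →
      ε ≤ (1/2) * ∑' x, ∑' y, c x y * (f x - f y)^2) :
    returnProb (fun x y => c x y / ∑' z, c x z) o < 1 := by
  obtain ⟨ε, hε, hres⟩ := hres
  have hfin : ∀ x, (Function.support (c x)).Finite := fun x =>
    (hlocfin x).subset fun y hy => (hnonneg x y).lt_of_ne' hy
  have hescape : ∀ A : Finset V, o ∈ A →
      hitProbWithin (transitionKernel c) o A o ≤ 1 - ε / totalConductance c o := by
    intro A hoA
    have henergy : ε ≤ dirichletEnergy c (unitVoltage (transitionKernel c) o A) :=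
      hres _ (unitVoltage_self o A) (A.finite_toSet.subset fun x hx =>
        by_contra fun hxA => hx (unitVoltage_eq_zero_of_notMem o A hoA hxA))
    rw [dirichletEnergy_unitVoltage hnonneg hfin hpos hsymm hoA] at henergy
    rwa [le_sub_comm, div_le_iff₀' (show 0 < totalConductance c o from hpos o)]
  calc returnProb (transitionKernel c) o ≤ 1 - ε / totalConductance c o :=
        returnProb_le_of_forall_hitProbWithin_le (transitionKernel_nonneg hnonneg hpos)
          (sum_transitionKernel_le_one hnonneg hfin hpos) hescape
    _ < 1 := sub_lt_self 1 (div_pos hε (hpos o))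

/-- For the random walk on an infinite, locally finite, connected
weighted graph with conductances `c`, if the effective resistance from `o` to
infinity is finite (equivalently, the effective conductance to infinity — the
infimum of the Dirichlet energy over finitely supported potentials equal to `1`
at `o` — is positive), then the walk started at `o` is transient:
`P_o[T_o⁺ = ∞] > 0`, i.e. the return probability is `< 1`. -/
theorem stmt7 {V : Type*} [Countable V] [DecidableEq V] [Infinite V]
    (c : V → V → ℝ) (hsymm : ∀ x y, c x y = c y x) (hnonneg : ∀ x y, 0 ≤ c x y)
    (hlocfin : ∀ x, {y | 0 < c x y}.Finite)
    (hpos : ∀ x, 0 < ∑' y, c x y)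
    (hconn : ∀ x y, Relation.ReflTransGen (fun u w => 0 < c u w) x y)
    (o : V)
    (hres : ∃ ε > 0, ∀ f : V → ℝ, f o = 1 → (Function.support f).Finite →
      ε ≤ (1/2) * ∑' x, ∑' y, c x y * (f x - f y)^2) :
    returnProb (fun x y => c x y / ∑' z, c x z) o < 1 :=
  stmt7_general c hsymm hnonneg hlocfin hpos o hres
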